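/- arXiv:2203.05423 — 3 statements merged into one kernel-verified Lean document; each statement's English description precedes it below -/
import Mathlib

section
/- Under the assumptions of the equality-of-covariances setting, the variance sequence satisfies 0 < inf_n σ_n² ≤ sup_n σ_n² < ∞, where σ_n² = log(1 − p/n) − Σ_{j=1}^q (n_j/n)² log(1 − p/n_j). -/
open MeasureTheory ProbabilityTheory Filter Matrix Finset Topology

noncomputable section

/-- The matrix (w.r.t. the standard basis) of the orthogonal projection of `ℝⁿ`
onto the orthogonal complement of the span of a set `S` of vectors. -/
def projCompl {n : ℕ} (S : Set (EuclideanSpace ℝ (Fin n))) :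
    Matrix (Fin n) (Fin n) ℝ :=
  Matrix.toEuclideanLin.symm
    ((Submodule.span ℝ S)ᗮ.subtypeL.toLinearMap ∘ₗ
      (Submodule.orthogonalProjectionOnto (Submodule.span ℝ S)ᗮ).toLinearMap)

/-- The quadratic form `vᵀ A v`. -/
def quadForm {n : ℕ} (A : Matrix (Fin n) (Fin n) ℝ) (v : Fin n → ℝ) : ℝ :=
  v ⬝ᵥ A.mulVec v

/-- `σ_n²` for the test of equality of covariance matrices. -/
def sigSqEq (n p q : ℕ) (nsub : ℕ → ℕ) : ℝ :=
  Real.log (1 - (p : ℝ) / n) -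
    ∑ j ∈ Finset.range q, ((nsub j : ℝ) / n) ^ 2 * Real.log (1 - (p : ℝ) / (nsub j))

/-! With `t = p / n`, weights `w j = n_j / n` summing to one and `φ x = -log (1 - x) - x`, the
linear parts cancel and `σ_n² = ∑ j, w j ^ 2 * φ (t / w j) - φ t`. The power series of
`φ x / x ^ 2` has nonnegative coefficients, so `w ^ 2 * φ (t / w) ≥ φ t` whenever `t < w ≤ 1`;
with at least two groups this gives `σ_n² ≥ φ t ≥ t ^ 2 / 2`, bounded below by `p / n ≥ c`.
For the upper bound, `log (1 - t) ≤ 0`, each `-log (1 - t / w j) ≤ -log (1 - C)`, and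
`∑ j, w j ^ 2 ≤ ∑ j, w j = 1`. -/

namespace Real

theorem hasSum_pow_div_neg_log_one_sub_sub_self {x : ℝ} (hx : |x| < 1) :
    HasSum (fun n : ℕ => x ^ (n + 2) / (n + 2)) (-log (1 - x) - x) := by
  have h := (hasSum_nat_add_iff' 1).2 (hasSum_pow_div_log_of_abs_lt_one hx)
  simpa [add_assoc, one_add_one_eq_two] using h

theorem sq_div_two_le_neg_log_one_sub_sub_self {x : ℝ} (h0 : 0 ≤ x) (h1 : x < 1) :
    x ^ 2 / 2 ≤ -log (1 - x) - x := by
  have h := le_hasSum (hasSum_pow_div_neg_log_one_sub_sub_self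
    (by rwa [abs_of_nonneg h0])) 0 (fun n _ => by positivity)
  simpa using h

/-- Monotonicity of `x ↦ (-log (1 - x) - x) / x ^ 2` on `[0, 1)`, written without division. -/
theorem neg_log_one_sub_sub_self_le_sq_mul {t w : ℝ} (ht : 0 ≤ t) (htw : t < w) (hw : w ≤ 1) :
    -log (1 - t) - t ≤ w ^ 2 * (-log (1 - t / w) - t / w) := by
  have hw0 : 0 < w := ht.trans_lt htw
  have htw' : |t / w| < 1 := by
    rw [abs_of_nonneg (by positivity), div_lt_one hw0]; exact htw
  refine hasSum_le (fun n => ?_) (hasSum_pow_div_neg_log_one_sub_sub_self (by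
    rw [abs_of_nonneg ht]; linarith)) ((hasSum_pow_div_neg_log_one_sub_sub_self htw').mul_left _)
  have hterm : w ^ 2 * ((t / w) ^ (n + 2) / (n + 2)) = t ^ (n + 2) / (n + 2) / w ^ n := by
    rw [div_pow, pow_add w n 2]
    field_simp [hw0.ne']
  rw [hterm]
  exact le_div_self (by positivity) (by positivity) (pow_le_one₀ hw0.le hw)

end Real

open Real

section WeightedLog

variable {ι : Type*} {s : Finset ι} {w : ι → ℝ} {t : ℝ}

theorem le_one_of_sum_eq_one (ht : 0 ≤ t) (htw : ∀ j ∈ s, t < w j) (hw : ∑ j ∈ s, w j = 1) :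
    ∀ j ∈ s, w j ≤ 1 := fun _ hj =>
  hw ▸ Finset.single_le_sum (fun i hi => ht.trans (htw i hi).le) hj

theorem sq_div_two_le_log_one_sub_sub_sum_sq_mul_log (hs : 2 ≤ s.card) (ht : 0 ≤ t)
    (htw : ∀ j ∈ s, t < w j) (hw : ∑ j ∈ s, w j = 1) :
    t ^ 2 / 2 ≤ log (1 - t) - ∑ j ∈ s, w j ^ 2 * log (1 - t / w j) := by
  have hterm : ∀ j ∈ s, w j ^ 2 * log (1 - t / w j) ≤ -(w j * t) - (-log (1 - t) - t) := by
    intro j hj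
    have h := neg_log_one_sub_sub_self_le_sq_mul ht (htw j hj) (le_one_of_sum_eq_one ht htw hw j hj)
    have hwt : w j ^ 2 * (t / w j) = w j * t := by
      field_simp [(ht.trans_lt (htw j hj)).ne']
    nlinarith
  have hsum : ∑ j ∈ s, w j ^ 2 * log (1 - t / w j) ≤ -t - s.card * (-log (1 - t) - t) := by
    calc ∑ j ∈ s, w j ^ 2 * log (1 - t / w j)
        ≤ ∑ j ∈ s, (-(w j * t) - (-log (1 - t) - t)) := Finset.sum_le_sum hterm
      _ = -t - s.card * (-log (1 - t) - t) := by
        rw [Finset.sum_sub_distrib, Finset.sum_neg_distrib, ← Finset.sum_mul, hw,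
          Finset.sum_const, nsmul_eq_mul]
        ring
  obtain ⟨j, hj⟩ := Finset.nonempty_of_sum_ne_zero (hw ▸ one_ne_zero : ∑ j ∈ s, w j ≠ 0)
  have ht1 : t < 1 := (htw j hj).trans_le (le_one_of_sum_eq_one ht htw hw j hj)
  have hφ := sq_div_two_le_neg_log_one_sub_sub_self ht ht1
  have hcard : (2 : ℝ) ≤ s.card := by exact_mod_cast hs
  nlinarith

theorem log_one_sub_sub_sum_sq_mul_log_le {C : ℝ} (hC : C < 1) (ht : 0 ≤ t)
    (htw : ∀ j ∈ s, t < w j) (hw : ∑ j ∈ s, w j = 1) (htC : ∀ j ∈ s, t / w j ≤ C) :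
    log (1 - t) - ∑ j ∈ s, w j ^ 2 * log (1 - t / w j) ≤ -log (1 - C) := by
  obtain ⟨j, hj⟩ := Finset.nonempty_of_sum_ne_zero (hw ▸ one_ne_zero : ∑ j ∈ s, w j ≠ 0)
  have hw1 := le_one_of_sum_eq_one ht htw hw
  have hlogt : log (1 - t) ≤ 0 := log_nonpos (by linarith [htw j hj, hw1 j hj]) (by linarith)
  have hlogC : 0 ≤ -log (1 - C) := by
    have hC0 : 0 ≤ C := (div_nonneg ht (ht.trans (htw j hj).le)).trans (htC j hj)
    linarith [log_nonpos (by linarith) (by linarith : 1 - C ≤ 1)]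
  have hterm : ∀ j ∈ s, -(w j ^ 2 * log (1 - t / w j)) ≤ w j * -log (1 - C) := by
    intro j hj
    have hwj : 0 ≤ w j := ht.trans (htw j hj).le
    have hlog : log (1 - C) ≤ log (1 - t / w j) :=
      log_le_log (by linarith) (by linarith [htC j hj])
    have hsq : w j ^ 2 ≤ w j := by nlinarith [hw1 j hj]
    nlinarith [mul_le_mul_of_nonneg_left hlog (sq_nonneg (w j))]
  have hsum : -∑ j ∈ s, w j ^ 2 * log (1 - t / w j) ≤ -log (1 - C) := by
    calc -∑ j ∈ s, w j ^ 2 * log (1 - t / w j)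
        = ∑ j ∈ s, -(w j ^ 2 * log (1 - t / w j)) := by rw [Finset.sum_neg_distrib]
      _ ≤ ∑ j ∈ s, w j * -log (1 - C) := Finset.sum_le_sum hterm
      _ = -log (1 - C) := by rw [← Finset.sum_mul, hw, one_mul]
  linarith

end WeightedLog

section SubsampleSizes

variable {n p q : ℕ} {nsub : ℕ → ℕ}

theorem sigSqEq_eq_weighted (hn : (n : ℝ) ≠ 0) :
    sigSqEq n p q nsub = log (1 - (p : ℝ) / n) -
      ∑ j ∈ range q, ((nsub j : ℝ) / n) ^ 2 * log (1 - (p : ℝ) / n / ((nsub j : ℝ) / n)) := by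
  simp only [sigSqEq, div_div_div_cancel_right₀ hn]

theorem natCast_ne_zero_of_sum_range_eq (hq : 0 < q) (hnj : ∀ j < q, p < nsub j)
    (hsum : ∑ j ∈ range q, nsub j = n) : (n : ℝ) ≠ 0 := by
  have h0 : nsub 0 ≤ n := hsum ▸ Finset.single_le_sum (fun _ _ => Nat.zero_le _) (mem_range.2 hq)
  have := hnj 0 hq
  exact_mod_cast (by omega : n ≠ 0)

theorem sum_range_natCast_div_eq_one (hn : (n : ℝ) ≠ 0) (hsum : ∑ j ∈ range q, nsub j = n) :
    ∑ j ∈ range q, (nsub j : ℝ) / n = 1 := by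
  rw [← Finset.sum_div, ← Nat.cast_sum, hsum, div_self hn]

theorem natCast_div_lt_natCast_div (hn : (n : ℝ) ≠ 0) (hnj : ∀ j < q, p < nsub j) :
    ∀ j ∈ range q, (p : ℝ) / n < (nsub j : ℝ) / n := fun j hj =>
  div_lt_div_of_pos_right (by exact_mod_cast hnj j (mem_range.1 hj)) (by positivity)

theorem sq_div_two_le_sigSqEq (hq : 2 ≤ q) (hnj : ∀ j < q, p < nsub j)
    (hsum : ∑ j ∈ range q, nsub j = n) :
    ((p : ℝ) / n) ^ 2 / 2 ≤ sigSqEq n p q nsub := by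
  have hn := natCast_ne_zero_of_sum_range_eq (by omega) hnj hsum
  rw [sigSqEq_eq_weighted hn]
  exact sq_div_two_le_log_one_sub_sub_sum_sq_mul_log (by simpa using hq) (by positivity)
    (natCast_div_lt_natCast_div hn hnj) (sum_range_natCast_div_eq_one hn hsum)

theorem sigSqEq_le_neg_log_one_sub {C : ℝ} (hC : C < 1) (hq : 0 < q)
    (hnj : ∀ j < q, p < nsub j) (hsum : ∑ j ∈ range q, nsub j = n)
    (hpC : ∀ j < q, (p : ℝ) / nsub j ≤ C) :
    sigSqEq n p q nsub ≤ -log (1 - C) := by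
  have hn := natCast_ne_zero_of_sum_range_eq hq hnj hsum
  rw [sigSqEq_eq_weighted hn]
  refine log_one_sub_sub_sum_sq_mul_log_le hC (by positivity)
    (natCast_div_lt_natCast_div hn hnj) (sum_range_natCast_div_eq_one hn hsum) fun j hj => ?_
  rw [div_div_div_cancel_right₀ hn]
  exact hpC j (mem_range.1 hj)

end SubsampleSizes

theorem statement_8_general
    (p q : ℕ → ℕ) (nsub : ℕ → ℕ → ℕ)
    (hq2 : ∀ n, 4 ≤ n → 2 ≤ q n)
    (hnjp : ∀ n, 4 ≤ n → ∀ j < q n, p n < nsub n j)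
    (hsum : ∀ n, 4 ≤ n → ∑ j ∈ Finset.range (q n), nsub n j = n)
    (hinf : ∃ c > 0, ∀ n, 4 ≤ n → c ≤ (p n : ℝ) / n)
    (hsup : ∃ C < 1, ∀ n, 4 ≤ n → ∀ j < q n, (p n : ℝ) / (nsub n j) ≤ C) :
    (∃ c > 0, ∀ n, 4 ≤ n → c ≤ sigSqEq n (p n) (q n) (nsub n)) ∧
    (∃ C : ℝ, ∀ n, 4 ≤ n → sigSqEq n (p n) (q n) (nsub n) ≤ C) := by
  obtain ⟨c, hc, hcp⟩ := hinf
  obtain ⟨C, hC, hpC⟩ := hsup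
  refine ⟨⟨c ^ 2 / 2, by positivity, fun n hn => ?_⟩, ⟨-log (1 - C), fun n hn =>
    sigSqEq_le_neg_log_one_sub hC (by linarith [hq2 n hn]) (hnjp n hn) (hsum n hn) (hpC n hn)⟩⟩
  calc c ^ 2 / 2 ≤ ((p n : ℝ) / n) ^ 2 / 2 := by gcongr; exact hcp n hn
    _ ≤ sigSqEq n (p n) (q n) (nsub n) := sq_div_two_le_sigSqEq (hq2 n hn) (hnjp n hn) (hsum n hn)

/-- **Lemma 5.8.** In the equality-of-covariances setting, `0 < inf σ_n² ≤ sup σ_n² < ∞`. -/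
theorem statement_8
    (p q : ℕ → ℕ) (nsub : ℕ → ℕ → ℕ)
    (hq2 : ∀ n, 4 ≤ n → 2 ≤ q n)
    (hp1 : ∀ n, 4 ≤ n → 1 ≤ p n)
    (hnjp : ∀ n, 4 ≤ n → ∀ j < q n, p n < nsub n j)
    (hsum : ∀ n, 4 ≤ n → ∑ j ∈ Finset.range (q n), nsub n j = n)
    (hinf : ∃ c > 0, ∀ n, 4 ≤ n → c ≤ (p n : ℝ) / n)
    (hsup : ∃ C < 1, ∀ n, 4 ≤ n → ∀ j < q n, (p n : ℝ) / (nsub n j) ≤ C) :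
    (∃ c > 0, ∀ n, 4 ≤ n → c ≤ sigSqEq n (p n) (q n) (nsub n)) ∧
    (∃ C : ℝ, ∀ n, 4 ≤ n → sigSqEq n (p n) (q n) (nsub n) ≤ C) :=
  statement_8_general p q nsub hq2 hnjp hsum hinf hsup
end
end

section
/- Under the stated asymptotic regime, the deterministic quantity Σ_{i=p_1+1}^p log(n−i+1) − Σ_{j=2}^q Σ_{i=p_{j−1}*+1}^{p_j*} log(n−i+1+p_{j−1}*) equals μ_n + σ_n²/2 + o(1) as n → ∞; that is, the difference of the two sides converges to 0. -/
open MeasureTheory ProbabilityTheory Filter Matrix Finset Topology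

noncomputable section

/-- Partial sums `p_j* = p_1 + … + p_j` of the block sizes (0-based list of sizes). -/
def pstar (psz : ℕ → ℕ) (j : ℕ) : ℕ := ∑ t ∈ Finset.range j, psz t

/-- `σ_n² = 2{Σ_{i=1}^q log(1 - p_i/n) - log(1 - p/n)}`. -/
def sigSq (n p q : ℕ) (psz : ℕ → ℕ) : ℝ :=
  2 * ((∑ j ∈ Finset.range q, Real.log (1 - (psz j : ℝ) / n)) -
    Real.log (1 - (p : ℝ) / n))

/-- `μ_n = Σ_{i=1}^q (n - p_i - 1/2) log(1 - p_i/n) - (n - p - 1/2) log(1 - p/n)`. -/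
def muN (n p q : ℕ) (psz : ℕ → ℕ) : ℝ :=
  (∑ j ∈ Finset.range q, ((n : ℝ) - psz j - 1 / 2) * Real.log (1 - (psz j : ℝ) / n)) -
    ((n : ℝ) - p - 1 / 2) * Real.log (1 - (p : ℝ) / n)

/-!
Both sides are combinations of log-falling-factorials `log (n! / (n - k)!)`: the left side is
`log (n)_p - Σ_j log (n)_{p_j}`, and `μ_n + σ_n² / 2` is the same combination of the Stirling
approximations `k log n - (n - k + 1/2) log (1 - k/n) - k`. The error of each approximation is
`log s_n - log s_{n-k}` for the Stirling sequence `s`, which Robbins' bound `1 / (12 m (m + 1))` on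
its increments makes at most `k / (12 n (n - k))`. Since `p_1 + … + p_q = p`, the errors add up to
at most `1 / (6 (n - p))`, and `n - p ≥ (1 - C) n → ∞` because `p / n ≤ C < 1`.
-/

open Stirling

lemma log_factorial_eq_add_log_stirlingSeq {m : ℕ} (hm : m ≠ 0) :
    Real.log m.factorial
      = m * Real.log m - m + Real.log m / 2 + Real.log 2 / 2 + Real.log (stirlingSeq m) := by
  have hm0 : (0 : ℝ) < m := by positivity
  rw [log_stirlingSeq_formula, Real.log_mul two_ne_zero hm0.ne',
    Real.log_div hm0.ne' (Real.exp_pos 1).ne', Real.log_exp]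
  ring

lemma abs_log_stirlingSeq_add_sub_le {m : ℕ} (hm : m ≠ 0) (k : ℕ) :
    |Real.log (stirlingSeq (m + k)) - Real.log (stirlingSeq m)| ≤ k / (12 * m * (m + k)) := by
  obtain ⟨m, rfl⟩ := Nat.exists_eq_succ_of_ne_zero hm
  have hanti := log_stirlingSeq'_antitone (Nat.le_add_right m k)
  -- Robbins' bound telescopes: `j ↦ log (stirlingSeq j) - 1 / (12 j)` increases for `j ≥ 1`.
  have hmono : Monotone fun j : ℕ => Real.log (stirlingSeq (j + 1)) - 1 / (12 * (j + 1 : ℝ)) := by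
    refine monotone_nat_of_le_succ fun j => ?_
    have := log_stirlingSeq_sdiff_le (j + 1)
    push_cast at this ⊢
    have e : 1 / (12 * ((j : ℝ) + 1)) - 1 / (12 * ((j : ℝ) + 1 + 1))
        = 1 / (12 * ((j : ℝ) + 1) * ((j : ℝ) + 1 + 1)) := by field_simp; ring
    linarith
  have hle := hmono (Nat.le_add_right m k)
  simp only [Function.comp_apply, Nat.succ_eq_add_one] at hanti
  rw [show m + 1 + k = m + k + 1 by ring, abs_sub_comm, abs_of_nonneg (by linarith)]
  push_cast at hle ⊢
  have e : 1 / (12 * ((m : ℝ) + 1)) - 1 / (12 * ((m : ℝ) + k + 1))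
      = k / (12 * ((m : ℝ) + 1) * ((m : ℝ) + 1 + k)) := by field_simp; ring
  linarith

lemma sum_range_log_sub_eq_log_factorial_sub {n k : ℕ} (hk : k ≤ n) :
    ∑ i ∈ range k, Real.log ((n : ℝ) - i) = Real.log n.factorial - Real.log (n - k).factorial := by
  induction k with
  | zero => simp
  | succ k ih =>
    have hpos : 0 < n - k := by omega
    have hfac : (n - k).factorial = (n - k) * (n - (k + 1)).factorial := by
      rw [show n - k = n - (k + 1) + 1 by omega, Nat.factorial_succ]
    rw [sum_range_succ, ih (by omega), hfac, Nat.cast_mul,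
      Real.log_mul (by positivity) (by positivity), Nat.cast_sub (by omega)]
    ring

def logDescFactorial (n k : ℕ) : ℝ := ∑ i ∈ range k, Real.log ((n : ℝ) - i)

def logDescFactorialApprox (n k : ℕ) : ℝ :=
  k * Real.log n - ((n : ℝ) - k + 1 / 2) * Real.log (1 - (k : ℝ) / n) - k

lemma logDescFactorial_eq_approx_add {n k : ℕ} (hk : k < n) :
    logDescFactorial n k = logDescFactorialApprox n k
      + (Real.log (stirlingSeq n) - Real.log (stirlingSeq (n - k))) := by
  have hn : (0 : ℝ) < n := by exact_mod_cast (Nat.zero_le k).trans_lt hk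
  have hnk : ((n - k : ℕ) : ℝ) = n - k := Nat.cast_sub hk.le
  have hkn : 0 < 1 - (k : ℝ) / n := by rw [sub_pos, div_lt_one hn]; exact_mod_cast hk
  have hlog : Real.log ((n : ℝ) - k) = Real.log n + Real.log (1 - (k : ℝ) / n) := by
    rw [← Real.log_mul hn.ne' hkn.ne']
    congr 1
    field_simp
  rw [logDescFactorial, sum_range_log_sub_eq_log_factorial_sub hk.le,
    log_factorial_eq_add_log_stirlingSeq (by omega), log_factorial_eq_add_log_stirlingSeq (by omega),
    hnk, hlog, logDescFactorialApprox]
  ring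

lemma abs_logDescFactorial_sub_approx_le {n k : ℕ} (hk : k < n) :
    |logDescFactorial n k - logDescFactorialApprox n k| ≤ k / (12 * ((n : ℝ) - k) * n) := by
  have h := abs_log_stirlingSeq_add_sub_le (m := n - k) (by omega) k
  rw [Nat.sub_add_cancel hk.le, Nat.cast_sub hk.le] at h
  rw [logDescFactorial_eq_approx_add hk, add_sub_cancel_left]
  simpa using h

lemma pstar_succ_sub (ps : ℕ → ℕ) (j : ℕ) : pstar ps (j + 1) - pstar ps j = ps j := by
  simp [pstar, sum_range_succ]

lemma blockSums_eq_logDescFactorial_sub {n p q : ℕ} {ps : ℕ → ℕ} (hq : q ≠ 0)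
    (hsum : ∑ j ∈ range q, ps j = p) :
    (∑ i ∈ Ico (ps 0) p, Real.log ((n : ℝ) - i)) -
        ∑ j ∈ Ico 1 q, ∑ i ∈ Ico (pstar ps j) (pstar ps (j + 1)),
          Real.log ((n : ℝ) - i + pstar ps j)
      = logDescFactorial n p - ∑ j ∈ range q, logDescFactorial n (ps j) := by
  have hps0 : ps 0 ≤ p := hsum ▸ single_le_sum (fun _ _ => Nat.zero_le _)
    (mem_range.mpr (Nat.pos_of_ne_zero hq))
  have hblock : ∀ j, ∑ i ∈ Ico (pstar ps j) (pstar ps (j + 1)),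
      Real.log ((n : ℝ) - i + pstar ps j) = logDescFactorial n (ps j) := fun j => by
    rw [sum_Ico_eq_sum_range, pstar_succ_sub, logDescFactorial]
    refine sum_congr rfl fun i _ => ?_
    push_cast
    ring_nf
  simp only [hblock, sum_range_eq_add_Ico _ (Nat.pos_of_ne_zero hq)]
  rw [sum_Ico_eq_sub _ hps0]
  simp only [logDescFactorial]
  ring

lemma muN_add_sigSq_div_two {n p q : ℕ} {ps : ℕ → ℕ} (hsum : ∑ j ∈ range q, ps j = p) :
    muN n p q ps + sigSq n p q ps / 2
      = logDescFactorialApprox n p - ∑ j ∈ range q, logDescFactorialApprox n (ps j) := by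
  have hsumR : ∑ j ∈ range q, (ps j : ℝ) = p := by exact_mod_cast hsum
  simp only [muN, sigSq, logDescFactorialApprox, sum_sub_distrib, ← sum_mul, hsumR]
  have hshift : ∑ j ∈ range q, ((n : ℝ) - ps j + 1 / 2) * Real.log (1 - (ps j : ℝ) / n)
      = ∑ j ∈ range q, ((n : ℝ) - ps j - 1 / 2) * Real.log (1 - (ps j : ℝ) / n)
        + ∑ j ∈ range q, Real.log (1 - (ps j : ℝ) / n) := by
    rw [← sum_add_distrib]; exact sum_congr rfl fun _ _ => by ring
  rw [hshift]
  ring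

lemma abs_blockSums_sub_muN_add_sigSq_le {n p q : ℕ} {ps : ℕ → ℕ} (hq : q ≠ 0)
    (hsum : ∑ j ∈ range q, ps j = p) (hpn : p < n) :
    |(∑ i ∈ Ico (ps 0) p, Real.log ((n : ℝ) - i)) -
        ∑ j ∈ Ico 1 q, ∑ i ∈ Ico (pstar ps j) (pstar ps (j + 1)),
          Real.log ((n : ℝ) - i + pstar ps j) -
      (muN n p q ps + sigSq n p q ps / 2)| ≤ (6 * ((n : ℝ) - p))⁻¹ := by
  set err : ℕ → ℝ := fun k => logDescFactorial n k - logDescFactorialApprox n k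
  have hnp : (0 : ℝ) < n - p := sub_pos.mpr (by exact_mod_cast hpn)
  have hn : (0 : ℝ) < n := by linarith [(p.cast_nonneg : (0 : ℝ) ≤ p)]
  have herr : ∀ k ≤ p, |err k| ≤ k / (12 * ((n : ℝ) - p) * n) := fun k hk =>
    (abs_logDescFactorial_sub_approx_le (hk.trans_lt hpn)).trans (by
      have : (k : ℝ) ≤ p := by exact_mod_cast hk
      gcongr)
  have hpsle : ∀ j ∈ range q, ps j ≤ p := fun j hj =>
    hsum ▸ single_le_sum (fun _ _ => Nat.zero_le _) hj
  have hsumR : ∑ j ∈ range q, (ps j : ℝ) = p := by exact_mod_cast hsum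
  rw [blockSums_eq_logDescFactorial_sub hq hsum, muN_add_sigSq_div_two hsum,
    show ∀ a b c d : ℝ, a - b - (c - d) = (a - c) - (b - d) by intros; ring, ← sum_sub_distrib]
  calc |err p - ∑ j ∈ range q, err (ps j)|
      ≤ |err p| + ∑ j ∈ range q, |err (ps j)| :=
        (abs_sub _ _).trans (add_le_add le_rfl (abs_sum_le_sum_abs _ _))
    _ ≤ p / (12 * ((n : ℝ) - p) * n) + ∑ j ∈ range q, ps j / (12 * ((n : ℝ) - p) * n) :=
        add_le_add (herr p le_rfl) (sum_le_sum fun j hj => herr _ (hpsle j hj))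
    _ = (p / n) * (6 * ((n : ℝ) - p))⁻¹ := by
        rw [← sum_div, hsumR]; field_simp; ring
    _ ≤ (6 * ((n : ℝ) - p))⁻¹ := by
        refine mul_le_of_le_one_left (by positivity) ((div_le_one hn).mpr ?_)
        exact_mod_cast hpn.le

theorem statement_12_general
    (p q : ℕ → ℕ) (psz : ℕ → ℕ → ℕ)
    (hpn : ∀ n, 3 ≤ n → p n < n)
    (hq2 : ∀ n, 3 ≤ n → 2 ≤ q n)
    (hsumsz : ∀ n, 3 ≤ n → ∑ j ∈ Finset.range (q n), psz n j = p n)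
    (hsup : ∃ C < 1, ∀ n, 3 ≤ n → (p n : ℝ) / n ≤ C) :
    Tendsto (fun n =>
        ((∑ i ∈ Finset.Ico (psz n 0) (p n), Real.log ((n : ℝ) - i)) -
          ∑ j ∈ Finset.Ico 1 (q n),
            ∑ i ∈ Finset.Ico (pstar (psz n) j) (pstar (psz n) (j + 1)),
              Real.log ((n : ℝ) - i + pstar (psz n) j)) -
        (muN n (p n) (q n) (psz n) + sigSq n (p n) (q n) (psz n) / 2))
      atTop (𝓝 0) := by
  obtain ⟨C, hC1, hC⟩ := hsup
  have hgap : Tendsto (fun n : ℕ => 6 * ((n : ℝ) - p n)) atTop atTop := by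
    refine Tendsto.const_mul_atTop (by norm_num) (tendsto_atTop_mono' _ ?_
      (tendsto_natCast_atTop_atTop.const_mul_atTop (sub_pos.mpr hC1)))
    filter_upwards [eventually_ge_atTop 3] with n hn
    have : (p n : ℝ) ≤ C * n := (div_le_iff₀ (by positivity)).mp (hC n hn)
    linarith
  refine squeeze_zero_norm' ?_ (tendsto_inv_atTop_zero.comp hgap)
  filter_upwards [eventually_ge_atTop 3] with n hn
  exact abs_blockSums_sub_muN_add_sigSq_le (by have := hq2 n hn; omega) (hsumsz n hn) (hpn n hn)

/-- Equation (5.2): Stirling-formula expansion of the centering term: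
`Σ_{i=p₁+1}^p log(n-i+1) - Σ_{j=2}^q Σ_{i=p*_{j-1}+1}^{p*_j} log(n-i+1+p*_{j-1})
  = μ_n + σ_n²/2 + o(1)`. -/
theorem statement_12
    (p q : ℕ → ℕ) (psz : ℕ → ℕ → ℕ) (η : ℝ) (hη0 : 0 < η) (hη1 : η < 1)
    (hp2 : ∀ n, 3 ≤ n → 2 ≤ p n) (hpn : ∀ n, 3 ≤ n → p n < n)
    (hq2 : ∀ n, 3 ≤ n → 2 ≤ q n)
    (hpsz1 : ∀ n, 3 ≤ n → ∀ j < q n, 1 ≤ psz n j)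
    (hsumsz : ∀ n, 3 ≤ n → ∑ j ∈ Finset.range (q n), psz n j = p n)
    (hinf : ∃ c > 0, ∀ n, 3 ≤ n → ∀ j < q n, c ≤ (psz n j : ℝ) * q n / n)
    (hsup : ∃ C < 1, ∀ n, 3 ≤ n → (p n : ℝ) / n ≤ C)
    (hmax : ∀ n, 3 ≤ n → ∀ j < q n, (psz n j : ℝ) ≤ η * p n) :
    Tendsto (fun n =>
        ((∑ i ∈ Finset.Ico (psz n 0) (p n), Real.log ((n : ℝ) - i)) -
          ∑ j ∈ Finset.Ico 1 (q n),
            ∑ i ∈ Finset.Ico (pstar (psz n) j) (pstar (psz n) (j + 1)),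
              Real.log ((n : ℝ) - i + pstar (psz n) j)) -
        (muN n (p n) (q n) (psz n) + sigSq n (p n) (q n) (psz n) / 2))
      atTop (𝓝 0) :=
  statement_12_general p q psz hpn hq2 hsumsz hsup
end
end

section
/- Under the stated asymptotic regime, the deterministic sums satisfy Σ_{i=p_1+1}^p σ_{n,1,i}² = σ_n² + o(1) as n → ∞, where σ_{n,1,i}² = 2(1/(n−i+1) − 1/(n−i+1+p_{g(i)−1}*)). -/
open MeasureTheory ProbabilityTheory Filter Matrix Finset Topology

noncomputable section

/-! Splitting off the first block, `σ_n² / 2 = (log (n - p₁) - log (n - p)) - Σ_{j ≥ 2} (log n - log (n - p_j))`.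
Each bracket is the integral of `t ↦ 1 / (n - t)` over an interval, `[p₁, p)` resp. `[0, p_j)`, and the
double sum is twice the matching left Riemann sums: the blocks `j ≥ 2` of the first term merge into
`[p₁, p)`, and the second term of block `j` is a shift of `[0, p_j)`. For this monotone integrand the
Riemann sum over `[a, b)` is within `1 / (n - b) - 1 / (n - a)` of the integral, so the total error is
`O(1 / (n - p)) = O(1 / n)` since `p ≤ C n` with `C < 1`. -/

open Real

lemma sub_div_le_log_sub_log {x y : ℝ} (hx : 0 < x) (hy : 0 < y) :
    (x - y) / x ≤ log x - log y := by
  have h := one_sub_inv_le_log_of_pos (div_pos hx hy)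
  rw [log_div hx.ne' hy.ne', inv_div] at h
  calc (x - y) / x = 1 - y / x := by field_simp
    _ ≤ log x - log y := h

lemma log_sub_log_le_sub_div {x y : ℝ} (hx : 0 < x) (hy : 0 < y) :
    log x - log y ≤ (x - y) / y := by
  have h := log_le_sub_one_of_pos (div_pos hx hy)
  rw [log_div hx.ne' hy.ne'] at h
  calc log x - log y ≤ x / y - 1 := h
    _ = (x - y) / y := by field_simp

/-- Left Riemann sum of `t ↦ 1 / (x - t)` on `[a, b]` minus its integral. -/
def logDefect (x : ℝ) (a b : ℕ) : ℝ :=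
  ∑ i ∈ Ico a b, 1 / (x - i) - (log (x - a) - log (x - b))

lemma logDefect_mem_Icc {x : ℝ} {a b : ℕ} (hab : a ≤ b) (hbx : (b : ℝ) < x) :
    logDefect x a b ∈ Set.Icc (-(1 / (x - b) - 1 / (x - a))) 0 := by
  induction b, hab using Nat.le_induction with
  | base => simp [logDefect]
  | succ b hab ih =>
    push_cast at hbx ⊢
    obtain ⟨ih₁, ih₂⟩ := ih (by linarith)
    have hX : 0 < x - b := by linarith
    have hY : 0 < x - (b + 1) := by linarith
    have h₁ := sub_div_le_log_sub_log hX hY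
    have h₂ := log_sub_log_le_sub_div hX hY
    have hXY : x - b - (x - (b + 1)) = 1 := by ring
    rw [hXY] at h₁ h₂
    have hstep : logDefect x a (b + 1) =
        logDefect x a b + (1 / (x - b) - (log (x - b) - log (x - (b + 1)))) := by
      simp only [logDefect, sum_Ico_succ_top hab]; push_cast; ring
    rw [hstep]
    constructor <;> linarith

lemma abs_logDefect_le {x : ℝ} {a b : ℕ} (hab : a ≤ b) (hbx : (b : ℝ) < x) :
    |logDefect x a b| ≤ 1 / (x - b) - 1 / (x - a) := by
  obtain ⟨h₁, h₂⟩ := logDefect_mem_Icc hab hbx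
  exact abs_le.2 ⟨h₁, by linarith⟩

lemma sum_Ico_sum_Ico_consecutive {M : Type*} [AddCommMonoid M] (f : ℕ → M) {P : ℕ → ℕ}
    (hP : Monotone P) (q : ℕ) :
    ∑ j ∈ Ico 1 q, ∑ i ∈ Ico (P j) (P (j + 1)), f i = ∑ i ∈ Ico (P 1) (P q), f i := by
  induction q with
  | zero => simp [Ico_eq_empty_of_le (hP (Nat.zero_le 1))]
  | succ q ih =>
    rcases Nat.eq_zero_or_pos q with rfl | hq
    · simp
    rw [sum_Ico_succ_top hq, ih, sum_Ico_consecutive _ (hP hq) (hP q.le_succ)]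

lemma pstar_monotone (psz : ℕ → ℕ) : Monotone (pstar psz) :=
  fun _ _ h => sum_le_sum_of_subset (range_subset_range.2 h)

lemma pstar_succ (psz : ℕ → ℕ) (j : ℕ) : pstar psz (j + 1) = pstar psz j + psz j :=
  sum_range_succ _ _

lemma sum_Ico_pstar_shift (x : ℝ) (psz : ℕ → ℕ) (j : ℕ) :
    ∑ i ∈ Ico (pstar psz j) (pstar psz (j + 1)), 1 / (x - i + pstar psz j) =
      ∑ i ∈ Ico 0 (psz j), 1 / (x - i) := by
  have hlen : pstar psz (j + 1) - pstar psz j = psz j := by rw [pstar_succ]; omega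
  rw [sum_Ico_eq_sum_range, hlen, range_eq_Ico]
  refine sum_congr rfl fun i _ => ?_
  push_cast
  ring_nf

lemma log_one_sub_div {x m : ℝ} (hx : x ≠ 0) (hmx : m ≠ x) :
    log (1 - m / x) = log (x - m) - log x := by
  rw [← log_div (sub_ne_zero.2 hmx.symm) hx, sub_div, div_self hx]

section Blocks

variable {n p q : ℕ} {psz : ℕ → ℕ}

lemma psz_le_of_sum_eq (hsum : ∑ j ∈ range q, psz j = p) {j : ℕ} (hj : j < q) : psz j ≤ p :=
  hsum ▸ single_le_sum (fun _ _ => Nat.zero_le _) (mem_range.2 hj)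

lemma sigSq_eq_log_sub (hq : 1 ≤ q) (hsum : ∑ j ∈ range q, psz j = p) (hpn : p < n) :
    sigSq n p q psz = 2 * ((log (n - psz 0) - log (n - p)) -
      ∑ j ∈ Ico 1 q, (log n - log (n - psz j))) := by
  have hn : (n : ℝ) ≠ 0 := by norm_cast; omega
  have hlog : ∀ m ≤ p, log (1 - (m : ℝ) / n) = log (n - m) - log n := fun m hm =>
    log_one_sub_div hn (by norm_cast; omega)
  rw [sigSq, range_eq_Ico, sum_eq_sum_Ico_succ_bot hq, hlog p le_rfl,
    hlog _ (psz_le_of_sum_eq hsum hq),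
    sum_congr rfl fun j hj => hlog _ (psz_le_of_sum_eq hsum (mem_Ico.1 hj).2), sum_sub_distrib,
    sum_sub_distrib]
  ring

lemma blockSum_sub_sigSq_eq (hq : 1 ≤ q) (hsum : ∑ j ∈ range q, psz j = p) (hpn : p < n) :
    (∑ j ∈ Ico 1 q, ∑ i ∈ Ico (pstar psz j) (pstar psz (j + 1)),
        2 * (1 / ((n : ℝ) - i) - 1 / ((n : ℝ) - i + pstar psz j))) - sigSq n p q psz =
      2 * (logDefect n (psz 0) p - ∑ j ∈ Ico 1 q, logDefect n 0 (psz j)) := by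
  have hblock : ∀ j, ∑ i ∈ Ico (pstar psz j) (pstar psz (j + 1)),
        2 * (1 / ((n : ℝ) - i) - 1 / ((n : ℝ) - i + pstar psz j)) =
      2 * (∑ i ∈ Ico (pstar psz j) (pstar psz (j + 1)), 1 / ((n : ℝ) - i) -
        ∑ i ∈ Ico 0 (psz j), 1 / ((n : ℝ) - i)) := fun j => by
    rw [← sum_Ico_pstar_shift, ← sum_sub_distrib, mul_sum]
  have hP1 : pstar psz 1 = psz 0 := by simp [pstar]
  have hPq : pstar psz q = p := hsum
  rw [sum_congr rfl fun j _ => hblock j, ← mul_sum, sum_sub_distrib,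
    sum_Ico_sum_Ico_consecutive _ (pstar_monotone psz), hP1, hPq, sigSq_eq_log_sub hq hsum hpn]
  simp only [logDefect, sum_sub_distrib, Nat.cast_zero, sub_zero]
  ring

lemma abs_blockSum_sub_sigSq_le (hq : 1 ≤ q) (hsum : ∑ j ∈ range q, psz j = p) (hpn : p < n) :
    |(∑ j ∈ Ico 1 q, ∑ i ∈ Ico (pstar psz j) (pstar psz (j + 1)),
        2 * (1 / ((n : ℝ) - i) - 1 / ((n : ℝ) - i + pstar psz j))) - sigSq n p q psz| ≤
      4 / (n - p) := by
  rw [blockSum_sub_sigSq_eq hq hsum hpn]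
  have hpn' : (p : ℝ) < n := by exact_mod_cast hpn
  have hgap : 0 < (n : ℝ) - p := sub_pos.2 hpn'
  have hn : (0 : ℝ) < n := by linarith [(p.cast_nonneg : (0 : ℝ) ≤ p)]
  have hfirst : |logDefect n (psz 0) p| ≤ 1 / (n - p) := by
    have h₀ : (psz 0 : ℝ) ≤ p := by exact_mod_cast psz_le_of_sum_eq hsum hq
    have h₁ : 0 < 1 / ((n : ℝ) - psz 0) := one_div_pos.2 (by linarith)
    linarith [abs_logDefect_le (x := n) (psz_le_of_sum_eq hsum hq) hpn']
  have hrest : ∀ j ∈ Ico 1 q, |logDefect n 0 (psz j)| ≤ psz j / (n * (n - p)) := by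
    intro j hj
    have hj : (psz j : ℝ) ≤ p := by exact_mod_cast psz_le_of_sum_eq hsum (mem_Ico.1 hj).2
    have hgap' : 0 < (n : ℝ) - psz j := by linarith
    calc |logDefect n 0 (psz j)| ≤ 1 / (n - psz j) - 1 / (n - (0 : ℕ)) :=
          abs_logDefect_le (Nat.zero_le _) (by linarith)
      _ = psz j / (n * (n - psz j)) := by rw [Nat.cast_zero, sub_zero]; field_simp; ring
      _ ≤ psz j / (n * (n - p)) := by gcongr
  have hsum_rest : ∑ j ∈ Ico 1 q, (psz j : ℝ) ≤ p := by
    rw [← hsum, range_eq_Ico]; push_cast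
    exact sum_le_sum_of_subset_of_nonneg (Ico_subset_Ico_left zero_le_one) fun _ _ _ => by positivity
  calc |2 * (logDefect n (psz 0) p - ∑ j ∈ Ico 1 q, logDefect n 0 (psz j))|
      ≤ 2 * (|logDefect n (psz 0) p| + ∑ j ∈ Ico 1 q, |logDefect n 0 (psz j)|) := by
        rw [abs_mul, abs_two]
        gcongr
        exact (abs_sub _ _).trans (by gcongr; exact abs_sum_le_sum_abs _ _)
    _ ≤ 2 * (1 / (n - p) + 1 / (n - p)) := by
        refine mul_le_mul_of_nonneg_left (add_le_add hfirst ?_) zero_le_two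
        calc ∑ j ∈ Ico 1 q, |logDefect n 0 (psz j)| ≤ p / (n * (n - p)) :=
              (sum_le_sum hrest).trans
                (by rw [← sum_div]; exact div_le_div_of_nonneg_right hsum_rest (by positivity))
          _ ≤ 1 / (n - p) := by rw [div_le_div_iff₀ (by positivity) hgap]; nlinarith
    _ = 4 / (n - p) := by ring

end Blocks

theorem statement_15_general
    (p q : ℕ → ℕ) (psz : ℕ → ℕ → ℕ)
    (hq2 : ∀ n, 3 ≤ n → 2 ≤ q n)
    (hsumsz : ∀ n, 3 ≤ n → ∑ j ∈ Finset.range (q n), psz n j = p n)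
    (hsup : ∃ C < 1, ∀ n, 3 ≤ n → (p n : ℝ) / n ≤ C) :
    Tendsto (fun n =>
        (∑ j ∈ Finset.Ico 1 (q n),
          ∑ i ∈ Finset.Ico (pstar (psz n) j) (pstar (psz n) (j + 1)),
            2 * (1 / ((n : ℝ) - i) - 1 / ((n : ℝ) - i + pstar (psz n) j))) -
        sigSq n (p n) (q n) (psz n))
      atTop (𝓝 0) := by
  obtain ⟨C, hC1, hC⟩ := hsup
  refine squeeze_zero_norm' ?_ (tendsto_const_div_atTop_nhds_zero_nat (4 / (1 - C)))
  filter_upwards [eventually_ge_atTop 3] with n hn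
  have hn0 : (0 : ℝ) < n := by positivity
  have hpC : (p n : ℝ) ≤ C * n := (div_le_iff₀ hn0).1 (hC n hn)
  have hpn : p n < n := by exact_mod_cast (by nlinarith : (p n : ℝ) < n)
  calc _ ≤ 4 / ((n : ℝ) - p n) :=
        abs_blockSum_sub_sigSq_le (by linarith [hq2 n hn]) (hsumsz n hn) hpn
    _ ≤ 4 / (1 - C) / n := by
        rw [div_div]
        gcongr
        nlinarith

/-- Equation (5.3): `Σ_{i=p₁+1}^p σ_{n,1,i}² = σ_n² + o(1)`, where
`σ_{n,1,i}² = 2(1/(n-i+1) - 1/(n-i+1+p*_{g(i)-1}))`. -/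
theorem statement_15
    (p q : ℕ → ℕ) (psz : ℕ → ℕ → ℕ) (η : ℝ) (hη0 : 0 < η) (hη1 : η < 1)
    (hp2 : ∀ n, 3 ≤ n → 2 ≤ p n) (hpn : ∀ n, 3 ≤ n → p n < n)
    (hq2 : ∀ n, 3 ≤ n → 2 ≤ q n)
    (hpsz1 : ∀ n, 3 ≤ n → ∀ j < q n, 1 ≤ psz n j)
    (hsumsz : ∀ n, 3 ≤ n → ∑ j ∈ Finset.range (q n), psz n j = p n)
    (hinf : ∃ c > 0, ∀ n, 3 ≤ n → ∀ j < q n, c ≤ (psz n j : ℝ) * q n / n)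
    (hsup : ∃ C < 1, ∀ n, 3 ≤ n → (p n : ℝ) / n ≤ C)
    (hmax : ∀ n, 3 ≤ n → ∀ j < q n, (psz n j : ℝ) ≤ η * p n) :
    Tendsto (fun n =>
        (∑ j ∈ Finset.Ico 1 (q n),
          ∑ i ∈ Finset.Ico (pstar (psz n) j) (pstar (psz n) (j + 1)),
            2 * (1 / ((n : ℝ) - i) - 1 / ((n : ℝ) - i + pstar (psz n) j))) -
        sigSq n (p n) (q n) (psz n))
      atTop (𝓝 0) :=
  statement_15_general p q psz hq2 hsumsz hsup
end
end
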